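/- arXiv:1811.02989 — 4 statements merged into one kernel-verified Lean document; each statement's English description precedes it below -/
import Mathlib

section
/- Let E be a real normed vector space, n a natural number, and ε > 0. Let f : [0,ε) → ℝ be of class C^{n+1} and set r̂(r) = e^{f(r)} r. Suppose u : (0,ε) → E admits, as r → 0⁺, the two expansions u(r) = Σ_{k=1}^{n} (U_k/k!) r^k + (P/(n+1)!) r^{n+1} log r + O(r^{n+1}) and u(r) = Σ_{k=1}^{n} (Û_k/k!) r̂(r)^k + (P̂/(n+1)!) r̂(r)^{n+1} log r̂(r) + O(r^{n+1}), for some vectors U_1, …, U_n, P, Û_1, …, Û_n, P̂ ∈ E. Then P̂ = e^{-(n+1) f(0)} P. -/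
/-!
Subtracting the two expansions cancels `u`. Writing `r̂ = e^f r`, Taylor's theorem for `e^{k f}`
makes each `r̂^k` a polynomial in `r` up to `O(r^{n+1})`, and since `log r̂ = f + log r` with
`r log r` bounded, `r̂^{n+1} log r̂ = e^{(n+1) f(0)} r^{n+1} log r + O(r^{n+1})`. Hence a
polynomial plus `(P - e^{(n+1) f(0)} P̂) / (n+1)! · r^{n+1} log r` is `O(r^{n+1})`. No polynomial
can absorb `r^{n+1} log r`: its constant term must vanish as `r → 0⁺`, after which one divides
by `r`, down to `log r`, which is unbounded. So the coefficient is zero. Vector values reduce to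
scalar ones by testing against continuous linear functionals.
-/

open Filter Topology Asymptotics Finset Polynomial

theorem taylorWithinEval_sub_isBigO_nhdsGT {E : Type*} [NormedAddCommGroup E] [NormedSpace ℝ E]
    {g : ℝ → E} {a b : ℝ} {m : ℕ} (hab : a < b)
    (hg : ContDiffOn ℝ (m + 1) g (Set.Icc a b)) :
    (fun x => g x - taylorWithinEval g m (Set.Icc a b) a x) =O[𝓝[>] a]
      fun x => (x - a) ^ (m + 1) := by
  obtain ⟨C, hC⟩ := exists_taylor_mean_remainder_bound hab.le hg
  refine IsBigO.of_bound C ?_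
  filter_upwards [Icc_mem_nhdsGT hab] with x hx
  rw [Real.norm_eq_abs, abs_of_nonneg (pow_nonneg (sub_nonneg.2 hx.1) _)]
  exact hC x hx

theorem ContinuousOn.isBigO_one_nhdsGT {E : Type*} [NormedAddCommGroup E]
    {g : ℝ → E} {a b : ℝ} (hab : a < b) (hg : ContinuousOn g (Set.Icc a b)) :
    g =O[𝓝[>] a] fun _ => (1 : ℝ) :=
  ((hg a ⟨le_rfl, hab.le⟩).mono_of_mem_nhdsWithin (Icc_mem_nhdsGT hab)).tendsto.isBigO_one ℝ

theorem eq_zero_of_mul_log_isBigO_one {b : ℝ}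
    (h : (fun r => b * Real.log r) =O[𝓝[>] (0 : ℝ)] fun _ => (1 : ℝ)) : b = 0 := by
  by_contra hb
  have hnorm : Tendsto (fun r => ‖b * Real.log r‖) (𝓝[>] (0 : ℝ)) atTop := by
    simp only [norm_mul, Real.norm_eq_abs]
    exact (tendsto_abs_atBot_atTop.comp Real.tendsto_log_nhdsGT_zero).const_mul_atTop
      (abs_pos.2 hb)
  exact not_isBoundedUnder_of_tendsto_atTop hnorm (isBigO_one_iff ℝ |>.1 h)

theorem Polynomial.eq_zero_of_eval_add_mul_pow_mul_log_isBigO {m : ℕ} {p : ℝ[X]} {b : ℝ}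
    (h : (fun r => p.eval r + b * (r ^ m * Real.log r)) =O[𝓝[>] (0 : ℝ)] fun r => r ^ m) :
    b = 0 := by
  induction m generalizing p with
  | zero =>
    have hp : (fun r => p.eval r) =O[𝓝[>] (0 : ℝ)] fun _ => (1 : ℝ) :=
      (p.continuous.tendsto 0).mono_left nhdsWithin_le_nhds |>.isBigO_one ℝ
    refine eq_zero_of_mul_log_isBigO_one ((h.sub hp).congr (fun r => ?_) fun r => ?_) <;> simp
  | succ m ih =>
    have hlog : Tendsto (fun r => r ^ (m + 1) * Real.log r) (𝓝[>] (0 : ℝ)) (𝓝 0) := by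
      have := ((continuous_pow m).tendsto 0).mul (Real.continuous_mul_log.tendsto 0)
      simpa [pow_succ, mul_assoc] using this.mono_left nhdsWithin_le_nhds
    have hp0 : p.eval 0 = 0 := by
      have hlim := ((p.continuous.tendsto 0).mono_left nhdsWithin_le_nhds).add (hlog.const_mul b)
      have hlim0 := h.trans_tendsto (((continuous_pow (m + 1)).tendsto' 0 0 (by simp)).mono_left
        nhdsWithin_le_nhds)
      simpa using tendsto_nhds_unique hlim hlim0
    obtain ⟨q, rfl⟩ : X ∣ p := X_dvd_iff.2 (by rwa [coeff_zero_eq_eval_zero])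
    refine ih (p := q) (((isBigO_refl (fun r : ℝ => r⁻¹) _).mul h).congr' ?_ ?_) <;>
      filter_upwards [self_mem_nhdsWithin] with r (hr : 0 < r)
    · simp only [eval_mul, eval_X]; field_simp; ring
    · field_simp; ring

def HasPolyExpansion (m : ℕ) (φ : ℝ → ℝ) : Prop :=
  ∃ p : ℝ[X], (fun r => φ r - p.eval r) =O[𝓝[>] (0 : ℝ)] fun r => r ^ m

namespace HasPolyExpansion

variable {m : ℕ} {φ ψ : ℝ → ℝ}

theorem of_isBigO (h : φ =O[𝓝[>] (0 : ℝ)] fun r => r ^ m) : HasPolyExpansion m φ :=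
  ⟨0, by simpa using h⟩

theorem pow (k : ℕ) : HasPolyExpansion m (fun r => r ^ k) :=
  ⟨X ^ k, by simpa using isBigO_zero _ _⟩

theorem add (hφ : HasPolyExpansion m φ) (hψ : HasPolyExpansion m ψ) :
    HasPolyExpansion m (fun r => φ r + ψ r) := by
  obtain ⟨p, hp⟩ := hφ
  obtain ⟨q, hq⟩ := hψ
  exact ⟨p + q, (hp.add hq).congr_left fun r => by simp only [eval_add]; ring⟩

theorem sub (hφ : HasPolyExpansion m φ) (hψ : HasPolyExpansion m ψ) :
    HasPolyExpansion m (fun r => φ r - ψ r) := by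
  obtain ⟨p, hp⟩ := hφ
  obtain ⟨q, hq⟩ := hψ
  exact ⟨p - q, (hp.sub hq).congr_left fun r => by simp only [eval_sub]; ring⟩

theorem const_mul (hφ : HasPolyExpansion m φ) (c : ℝ) :
    HasPolyExpansion m (fun r => c * φ r) := by
  obtain ⟨p, hp⟩ := hφ
  exact ⟨C c * p, (hp.const_mul_left c).congr_left fun r => by
    simp only [eval_mul, eval_C]; ring⟩

theorem mul_const (hφ : HasPolyExpansion m φ) (c : ℝ) :
    HasPolyExpansion m (fun r => φ r * c) := by
  simpa only [mul_comm] using hφ.const_mul c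

theorem mul_pow (hφ : HasPolyExpansion m φ) (k : ℕ) :
    HasPolyExpansion m (fun r => φ r * r ^ k) := by
  obtain ⟨p, hp⟩ := hφ
  have hk : (fun r : ℝ => r ^ k) =O[𝓝[>] (0 : ℝ)] fun _ => (1 : ℝ) :=
    ((continuous_pow k).tendsto 0).mono_left nhdsWithin_le_nhds |>.isBigO_one ℝ
  exact ⟨p * X ^ k, (hp.mul hk).congr (fun r => by simp only [eval_mul, eval_pow, eval_X]; ring)
    fun r => mul_one _⟩

theorem sum {ι : Type*} (s : Finset ι) {φ : ι → ℝ → ℝ}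
    (h : ∀ i ∈ s, HasPolyExpansion m (φ i)) :
    HasPolyExpansion m (fun r => ∑ i ∈ s, φ i r) := by
  classical
  induction s using Finset.induction_on with
  | empty => exact ⟨0, by simpa using isBigO_zero _ _⟩
  | insert a s ha ih =>
    simp only [Finset.sum_insert ha]
    exact (h a (mem_insert_self a s)).add (ih fun i hi => h i (mem_insert_of_mem hi))

theorem of_contDiffOn {g : ℝ → ℝ} {b : ℝ} (hb : 0 < b)
    (hg : ContDiffOn ℝ (m + 1) g (Set.Icc 0 b)) : HasPolyExpansion (m + 1) g := by
  refine ⟨∑ i ∈ range (m + 1),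
    C ((i.factorial : ℝ)⁻¹ * iteratedDerivWithin i g (Set.Icc 0 b) 0) * X ^ i, ?_⟩
  simpa [taylor_within_apply, eval_finsetSum, mul_comm, mul_assoc] using
    taylorWithinEval_sub_isBigO_nhdsGT hb hg

theorem eq_zero_of_add_mul_log_isBigO (hφ : HasPolyExpansion m φ) {b : ℝ}
    (h : (fun r => φ r + b * (r ^ m * Real.log r)) =O[𝓝[>] (0 : ℝ)] fun r => r ^ m) :
    b = 0 := by
  obtain ⟨p, hp⟩ := hφ
  exact Polynomial.eq_zero_of_eval_add_mul_pow_mul_log_isBigO (p := p)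
    ((h.sub hp).congr_left fun r => by ring)

end HasPolyExpansion

section RescaledVariable

variable {f : ℝ → ℝ} {b : ℝ}

theorem hasPolyExpansion_exp_mul_pow {m : ℕ} (hb : 0 < b)
    (hf : ContDiffOn ℝ (m + 1) f (Set.Icc 0 b)) (k : ℕ) :
    HasPolyExpansion (m + 1) (fun r => (Real.exp (f r) * r) ^ k) := by
  simpa only [mul_pow] using (HasPolyExpansion.of_contDiffOn hb (hf.exp.pow k)).mul_pow k

theorem exp_mul_pow_mul_log_sub_isBigO (hb : 0 < b) (hf : ContDiffOn ℝ 1 f (Set.Icc 0 b))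
    (m : ℕ) :
    (fun r => (Real.exp (f r) * r) ^ m * Real.log (Real.exp (f r) * r)
        - Real.exp (f 0) ^ m * (r ^ m * Real.log r)) =O[𝓝[>] (0 : ℝ)] fun r => r ^ m := by
  set G : ℝ → ℝ := fun r => Real.exp (f r) ^ m
  have hG : ContDiffOn ℝ (0 + 1) G (Set.Icc 0 b) := by simpa using hf.exp.pow m
  have hG_sub : (fun r => G r - G 0) =O[𝓝[>] (0 : ℝ)] fun r => r := by
    simpa [taylor_within_zero_eval] using taylorWithinEval_sub_isBigO_nhdsGT hb hG
  have hGf : (fun r => G r * f r) =O[𝓝[>] (0 : ℝ)] fun _ => (1 : ℝ) :=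
    (hG.continuousOn.mul hf.continuousOn).isBigO_one_nhdsGT hb
  have hmul_log : (fun r => r * Real.log r) =O[𝓝[>] (0 : ℝ)] fun _ => (1 : ℝ) :=
    (Real.continuous_mul_log.tendsto 0).mono_left nhdsWithin_le_nhds |>.isBigO_one ℝ
  have hpow := isBigO_refl (fun r : ℝ => r ^ m) (𝓝[>] 0)
  have hsum := (hGf.mul hpow).add (((hG_sub.mul (isBigO_refl Real.log _)).trans hmul_log).mul hpow)
  refine hsum.congr' ?_ (by simp)
  filter_upwards [self_mem_nhdsWithin] with r (hr : 0 < r)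
  simp only [G, mul_pow, Real.log_mul (Real.exp_ne_zero _) hr.ne', Real.log_exp]
  ring

end RescaledVariable

theorem log_coeff_conformal_covariance_real (n : ℕ) {b : ℝ} (hb : 0 < b)
    {f : ℝ → ℝ} (hf : ContDiffOn ℝ (n + 1) f (Set.Icc 0 b))
    {u : ℝ → ℝ} {U Uhat : ℕ → ℝ} {P Phat : ℝ}
    (h₁ : (fun r : ℝ =>
        u r - ∑ k ∈ Icc 1 n, ((k.factorial : ℝ))⁻¹ * r ^ k * U k
          - (((n + 1).factorial : ℝ))⁻¹ * (r ^ (n + 1) * Real.log r) * P)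
      =O[𝓝[>] (0 : ℝ)] fun r => r ^ (n + 1))
    (h₂ : (fun r : ℝ =>
        u r - ∑ k ∈ Icc 1 n, ((k.factorial : ℝ))⁻¹ * (Real.exp (f r) * r) ^ k * Uhat k
          - (((n + 1).factorial : ℝ))⁻¹ *
              ((Real.exp (f r) * r) ^ (n + 1) * Real.log (Real.exp (f r) * r)) * Phat)
      =O[𝓝[>] (0 : ℝ)] fun r => r ^ (n + 1)) :
    Phat = Real.exp (-((n : ℝ) + 1) * f 0) * P := by
  set c : ℝ := (((n + 1).factorial : ℝ))⁻¹
  have hpoly : HasPolyExpansion (n + 1) (fun r =>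
      ∑ k ∈ Icc 1 n, (k.factorial : ℝ)⁻¹ * r ^ k * U k
        - ∑ k ∈ Icc 1 n, (k.factorial : ℝ)⁻¹ * (Real.exp (f r) * r) ^ k * Uhat k
        - c * Phat * ((Real.exp (f r) * r) ^ (n + 1) * Real.log (Real.exp (f r) * r)
          - Real.exp (f 0) ^ (n + 1) * (r ^ (n + 1) * Real.log r))) :=
    ((HasPolyExpansion.sum _ fun k _ => ((HasPolyExpansion.pow k).const_mul _).mul_const _).sub
      (HasPolyExpansion.sum _ fun k _ =>
        ((hasPolyExpansion_exp_mul_pow hb hf k).const_mul _).mul_const _)).sub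
      (.of_isBigO ((exp_mul_pow_mul_log_sub_isBigO hb (hf.of_le (by simp)) _).const_mul_left _))
  have hlog_coeff : c * (P - Real.exp (f 0) ^ (n + 1) * Phat) = 0 :=
    hpoly.eq_zero_of_add_mul_log_isBigO ((h₂.sub h₁).congr_left fun r => by ring)
  have hP : P = Real.exp (f 0) ^ (n + 1) * Phat :=
    sub_eq_zero.1 ((mul_eq_zero.1 hlog_coeff).resolve_left (by positivity))
  have hexp : Real.exp (-((n : ℝ) + 1) * f 0) * Real.exp (f 0) ^ (n + 1) = 1 := by
    rw [← Real.exp_nat_mul, ← Real.exp_add, Real.exp_eq_one_iff]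
    push_cast
    ring
  rw [hP, ← mul_assoc, hexp, one_mul]

/-- CR covariance of the log-term coefficient: if `u` admits the expansion
`u(r) = Σ_{k=1}^n (U_k/k!) r^k + (P/(n+1)!) r^{n+1} log r + O(r^{n+1})` and also
the analogous expansion in the rescaled variable `r̂ = e^{f} r`, then the two
log coefficients are related by `P̂ = e^{-(n+1) f(0)} P`. -/
theorem log_coeff_conformal_covariance
    {E : Type*} [NormedAddCommGroup E] [NormedSpace ℝ E]
    (n : ℕ) (ε : ℝ) (hε : 0 < ε)
    (f : ℝ → ℝ) (hf : ContDiffOn ℝ (n + 1) f (Set.Ico 0 ε))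
    (u : ℝ → E) (U Uhat : ℕ → E) (P Phat : E)
    (h₁ : (fun r : ℝ =>
        u r - ∑ k ∈ Icc 1 n, (((k.factorial : ℝ))⁻¹ * r ^ k) • U k
          - ((((n + 1).factorial : ℝ))⁻¹ * (r ^ (n + 1) * Real.log r)) • P)
      =O[𝓝[>] (0 : ℝ)] fun r => r ^ (n + 1))
    (h₂ : (fun r : ℝ =>
        u r - ∑ k ∈ Icc 1 n,
            (((k.factorial : ℝ))⁻¹ * (Real.exp (f r) * r) ^ k) • Uhat k
          - ((((n + 1).factorial : ℝ))⁻¹ *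
              ((Real.exp (f r) * r) ^ (n + 1) * Real.log (Real.exp (f r) * r))) • Phat)
      =O[𝓝[>] (0 : ℝ)] fun r => r ^ (n + 1)) :
    Phat = Real.exp (-((n : ℝ) + 1) * f 0) • P := by
  have hf' : ContDiffOn ℝ (n + 1) f (Set.Icc 0 (ε / 2)) :=
    hf.mono fun r hr => ⟨hr.1, hr.2.trans_lt (half_lt_self hε)⟩
  refine (SeparatingDual.eq_iff_forall_dual_eq (R := ℝ)).2 fun φ => ?_
  have hφ₁ := (φ.isBigO_comp _ _).trans h₁
  have hφ₂ := (φ.isBigO_comp _ _).trans h₂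
  simp only [map_sub, map_sum, map_smul, smul_eq_mul] at hφ₁ hφ₂
  simpa using log_coeff_conformal_covariance_real n (half_pos hε) hf' hφ₁ hφ₂
end

section
/- Let E be a real normed vector space, n a natural number, and ε > 0. Let f : [0,ε) → ℝ be of class C^{n+1} and set r̂(r) = e^{f(r)} r. Suppose u : (0,ε) → E admits, as r → 0⁺, the two expansions u(r) = Σ_{k=1}^{n} (U_k/k!) r^k + (P/(n+1)!) r^{n+1} log r + O(r^{n+1}) and u(r) = Σ_{k=1}^{n} (Û_k/k!) r̂(r)^k + (P̂/(n+1)!) r̂(r)^{n+1} log r̂(r) + O(r^{n+1}), for some vectors U_1, …, U_n, P, Û_1, …, Û_n, P̂ ∈ E. Then P = 0 if and only if P̂ = 0. -/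
open Filter Topology Asymptotics Finset

/-!
Since `log r̂ = f + log r`, subtracting the two expansions gives
`S r + (r ^ (n + 1) * log r) • Z r = O(r ^ (n + 1))`, where `S` is `C^{n+1}` on `[0, ε)` and
`Z r = (e^{(n+1) f r} • P̂ - P) / (n + 1)!` is continuous. Replacing `S` by its Taylor polynomial
of degree `n`, that polynomial is `o(r ^ n)`, hence zero; then the log term itself is
`O(r ^ (n + 1)) = o(r ^ (n + 1) * log r)`, which forces `Z 0 = 0`, i.e. `P = e^{(n+1) f 0} • P̂`.
-/

theorem frequently_pow_ne_zero_nhdsGT (n : ℕ) : ∃ᶠ r in 𝓝[>] (0 : ℝ), r ^ n ≠ 0 :=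
  Eventually.frequently <| by
    filter_upwards [self_mem_nhdsWithin] with r (hr : 0 < r) using pow_ne_zero n hr.ne'

theorem isLittleO_pow_succ_pow_nhdsGT (n : ℕ) :
    (fun r : ℝ => r ^ (n + 1)) =o[𝓝[>] 0] fun r => r ^ n :=
  (isLittleO_pow_pow n.lt_succ_self).mono nhdsWithin_le_nhds

theorem isLittleO_pow_succ_mul_log_pow (n : ℕ) :
    (fun r : ℝ => r ^ (n + 1) * Real.log r) =o[𝓝[>] 0] fun r => r ^ n := by
  have hlog : (fun r : ℝ => r * Real.log r) =o[𝓝[>] 0] fun _ => (1 : ℝ) :=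
    (isLittleO_one_iff ℝ).2 <| by
      simpa using (Real.continuous_mul_log.tendsto 0).mono_left nhdsWithin_le_nhds
  simpa [pow_succ, mul_assoc] using (isBigO_refl (fun r : ℝ => r ^ n) _).mul_isLittleO hlog

theorem isLittleO_pow_pow_mul_log (n : ℕ) :
    (fun r : ℝ => r ^ n) =o[𝓝[>] 0] fun r => r ^ n * Real.log r := by
  have hlog : (fun _ => (1 : ℝ)) =o[𝓝[>] 0] Real.log :=
    (isLittleO_one_left_iff ℝ).2 <| tendsto_abs_atBot_atTop.comp Real.tendsto_log_nhdsGT_zero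
  simpa using (isBigO_refl (fun r : ℝ => r ^ n) _).mul_isLittleO hlog

section

variable {E : Type*} [NormedAddCommGroup E] [NormedSpace ℝ E]

theorem eq_zero_of_smul_isLittleO_self {α : Type*} {l : Filter α} {g : α → ℝ} {Z : E}
    (hg : ∃ᶠ x in l, g x ≠ 0) (h : (fun x => g x • Z) =o[l] g) : Z = 0 := by
  by_contra hZ
  refine isLittleO_irrefl hg (IsBigO.trans_isLittleO ?_ h)
  refine IsBigO.of_bound ‖Z‖⁻¹ (Eventually.of_forall fun x => ?_)
  rw [norm_smul, mul_comm, mul_inv_cancel_right₀ (norm_ne_zero_iff.2 hZ)]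

theorem isBigO_smul_const {α : Type*} {l : Filter α} (g : α → ℝ) (D : E) :
    (fun x => g x • D) =O[l] g := by
  simpa using (isBigO_refl g l).smul (isBigO_const_one ℝ D l)

theorem ContDiffOn.sub_taylorWithinEval_isBigO {f : ℝ → E} {s : Set ℝ} {x₀ : ℝ} {n : ℕ}
    (hf : ContDiffOn ℝ (n + 1) f s) (hs : Convex ℝ s) (hx₀ : x₀ ∈ s) :
    (fun x => f x - taylorWithinEval f n s x₀ x) =O[𝓝[s] x₀] fun x => (x - x₀) ^ (n + 1) := by
  have hf' : ContDiffOn ℝ ((n + 1 : ℕ) : WithTop ℕ∞) f s := by exact_mod_cast hf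
  have hlast : (fun x => (((n + 1 : ℝ) * n.factorial)⁻¹ * (x - x₀) ^ (n + 1)) •
      iteratedDerivWithin (n + 1) f s x₀) =O[𝓝[s] x₀] fun x => (x - x₀) ^ (n + 1) :=
    (isBigO_smul_const _ _).trans ((isBigO_refl _ _).const_mul_left _)
  refine ((taylor_isLittleO hs hx₀ hf').isBigO.add hlast).congr_left fun x => ?_
  simp only [taylorWithinEval_succ]
  abel

theorem coeff_eq_zero_of_sum_pow_smul_isLittleO {n : ℕ} {V : ℕ → E}
    (h : (fun r : ℝ => ∑ k ∈ range (n + 1), r ^ k • V k) =o[𝓝[>] 0] fun r => r ^ n) :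
    ∀ k ∈ range (n + 1), V k = 0 := by
  induction n with
  | zero =>
    simp only [zero_add, range_one, sum_singleton, mem_singleton, forall_eq] at h ⊢
    exact eq_zero_of_smul_isLittleO_self (frequently_pow_ne_zero_nhdsGT 0) h
  | succ n ih =>
    have htop : (fun r : ℝ => r ^ (n + 1) • V (n + 1)) =o[𝓝[>] 0] fun r => r ^ n :=
      (isBigO_smul_const _ _).trans_isLittleO (isLittleO_pow_succ_pow_nhdsGT n)
    have hlow := ih (((h.trans (isLittleO_pow_succ_pow_nhdsGT n)).sub htop).congr_left
      fun r => by simp only [sum_range_succ _ (n + 1), add_sub_cancel_right])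
    have hlast : V (n + 1) = 0 := eq_zero_of_smul_isLittleO_self
      (frequently_pow_ne_zero_nhdsGT (n + 1)) (h.congr_left fun r => by
        rw [sum_range_succ, sum_eq_zero fun k hk => by rw [hlow k hk, smul_zero], zero_add])
    intro k hk
    rcases Nat.lt_succ_iff_lt_or_eq.1 (mem_range.1 hk) with hk | rfl
    exacts [hlow k (mem_range.2 hk), hlast]

theorem eq_zero_of_sum_add_pow_mul_log_smul_isBigO {n : ℕ} {V : ℕ → E} {Z : ℝ → E} {Z₀ : E}
    (hZ : Tendsto Z (𝓝[>] 0) (𝓝 Z₀))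
    (h : (fun r : ℝ => ∑ k ∈ range (n + 1), r ^ k • V k + (r ^ (n + 1) * Real.log r) • Z r)
      =O[𝓝[>] 0] fun r => r ^ (n + 1)) :
    Z₀ = 0 := by
  have hlog_small : (fun r : ℝ => (r ^ (n + 1) * Real.log r) • Z r) =o[𝓝[>] 0]
      fun r => r ^ n := by
    simpa using (isLittleO_pow_succ_mul_log_pow n).smul_isBigO (hZ.isBigO_one ℝ)
  have hV := coeff_eq_zero_of_sum_pow_smul_isLittleO
    (((h.trans_isLittleO (isLittleO_pow_succ_pow_nhdsGT n)).sub hlog_small).congr_left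
      fun r => add_sub_cancel_right _ _)
  have hlog_term : (fun r : ℝ => (r ^ (n + 1) * Real.log r) • Z r) =O[𝓝[>] 0]
      fun r => r ^ (n + 1) :=
    h.congr_left fun r => by rw [sum_eq_zero fun k hk => by rw [hV k hk, smul_zero], zero_add]
  have hdev : (fun r : ℝ => (r ^ (n + 1) * Real.log r) • (Z r - Z₀)) =o[𝓝[>] 0]
      fun r => r ^ (n + 1) * Real.log r := by
    simpa using (isBigO_refl (fun r : ℝ => r ^ (n + 1) * Real.log r) _).smul_isLittleO
      ((isLittleO_one_iff ℝ).2 (tendsto_sub_nhds_zero_iff.2 hZ))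
  refine eq_zero_of_smul_isLittleO_self ?_
    (((hlog_term.trans_isLittleO (isLittleO_pow_pow_mul_log _)).sub hdev).congr_left
      fun r => by rw [smul_sub, sub_sub_cancel])
  refine Eventually.frequently ?_
  filter_upwards [Ioo_mem_nhdsGT zero_lt_one] with r hr
  exact mul_ne_zero (pow_ne_zero _ hr.1.ne') (Real.log_neg hr.1 hr.2).ne

theorem log_coeff_eq_zero_of_contDiffOn_add_isBigO {n : ℕ} {S Z : ℝ → E} {Z₀ : E} {s : Set ℝ}
    (hs : Convex ℝ s) (hs₀ : 0 ∈ s) (hs_nhds : s ∈ 𝓝[>] 0) (hS : ContDiffOn ℝ (n + 1) S s)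
    (hZ : Tendsto Z (𝓝[>] 0) (𝓝 Z₀))
    (h : (fun r : ℝ => S r + (r ^ (n + 1) * Real.log r) • Z r) =O[𝓝[>] 0]
      fun r => r ^ (n + 1)) :
    Z₀ = 0 := by
  have hTaylor := (hS.sub_taylorWithinEval_isBigO hs hs₀).mono (nhdsWithin_le_iff.2 hs_nhds)
  refine eq_zero_of_sum_add_pow_mul_log_smul_isBigO (V := fun k => taylorCoeffWithin S k s 0) hZ
    ((h.sub (hTaylor.congr_right fun r => by rw [sub_zero])).congr_left fun r => ?_)
  simp only [taylor_within_apply, taylorCoeffWithin, sub_zero, smul_smul, mul_comm]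
  abel

end

/-- CR covariance of the log-term coefficient: if `u` admits the expansion
`u(r) = Σ_{k=1}^n (U_k/k!) r^k + (P/(n+1)!) r^{n+1} log r + O(r^{n+1})` and also
the analogous expansion in the rescaled variable `r̂ = e^{f} r`, then the two
log coefficients vanish simultaneously: `P = 0 ↔ P̂ = 0`. -/
theorem log_coeff_vanishing_invariant
    {E : Type*} [NormedAddCommGroup E] [NormedSpace ℝ E]
    (n : ℕ) (ε : ℝ) (hε : 0 < ε)
    (f : ℝ → ℝ) (hf : ContDiffOn ℝ (n + 1) f (Set.Ico 0 ε))
    (u : ℝ → E) (U Uhat : ℕ → E) (P Phat : E)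
    (h₁ : (fun r : ℝ =>
        u r - ∑ k ∈ Icc 1 n, (((k.factorial : ℝ))⁻¹ * r ^ k) • U k
          - ((((n + 1).factorial : ℝ))⁻¹ * (r ^ (n + 1) * Real.log r)) • P)
      =O[𝓝[>] (0 : ℝ)] fun r => r ^ (n + 1))
    (h₂ : (fun r : ℝ =>
        u r - ∑ k ∈ Icc 1 n,
            (((k.factorial : ℝ))⁻¹ * (Real.exp (f r) * r) ^ k) • Uhat k
          - ((((n + 1).factorial : ℝ))⁻¹ *
              ((Real.exp (f r) * r) ^ (n + 1) * Real.log (Real.exp (f r) * r))) • Phat)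
      =O[𝓝[>] (0 : ℝ)] fun r => r ^ (n + 1)) :
    P = 0 ↔ Phat = 0 := by
  set c : ℝ := ((n + 1).factorial : ℝ)⁻¹
  set S : ℝ → E := fun r =>
    ∑ k ∈ Icc 1 n, ((k.factorial : ℝ)⁻¹ * (Real.exp (f r) * r) ^ k) • Uhat k
      - ∑ k ∈ Icc 1 n, ((k.factorial : ℝ)⁻¹ * r ^ k) • U k
      + (c * ((Real.exp (f r) * r) ^ (n + 1) * f r)) • Phat
  set Z : ℝ → E := fun r => c • (Real.exp (f r) ^ (n + 1) • Phat - P)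
  have hs : Set.Ico 0 ε ∈ 𝓝[>] (0 : ℝ) :=
    mem_of_superset (Ioo_mem_nhdsGT hε) Set.Ioo_subset_Ico_self
  have hS : ContDiffOn ℝ (n + 1) S (Set.Ico 0 ε) := by fun_prop
  have hZ : Tendsto Z (𝓝[>] 0) (𝓝 (Z 0)) := by
    have hf0 := (hf.continuousOn.continuousWithinAt ⟨le_rfl, hε⟩).tendsto.mono_left
      (nhdsWithin_le_iff.2 hs)
    exact ((hf0.rexp.pow (n + 1)).smul_const Phat |>.sub_const P).const_smul c
  have hsum : (fun r : ℝ => S r + (r ^ (n + 1) * Real.log r) • Z r) =O[𝓝[>] 0]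
      fun r => r ^ (n + 1) := by
    refine (h₁.sub h₂).congr' ?_ EventuallyEq.rfl
    filter_upwards [self_mem_nhdsWithin] with r (hr : 0 < r)
    simp only [S, Z, Real.log_mul (Real.exp_ne_zero _) hr.ne', Real.log_exp, mul_pow]
    module
  have hZ0 : Z 0 = 0 :=
    log_coeff_eq_zero_of_contDiffOn_add_isBigO (convex_Ico 0 ε) ⟨le_rfl, hε⟩ hs hS hZ hsum
  have hP : P = Real.exp (f 0) ^ (n + 1) • Phat := by
    have hc : c ≠ 0 := by positivity
    exact (sub_eq_zero.1 ((smul_eq_zero.1 hZ0).resolve_left hc)).symm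
  simp [hP, Real.exp_ne_zero]
end

section
/- Let n ≥ 1 be a natural number and ε, ε̂ > 0. Let f : [0,ε) → ℝ be smooth and set φ(r) = e^{f(r)} r. Let w : (0,ε) → ℝ and ŵ : (0,ε̂) → ℝ be continuous functions admitting, for real numbers a_0, …, a_n and â_0, …, â_n, the expansions w(r) = Σ_{k=0}^{n} a_k r^{k−n−1} + O(|log r|) as r → 0⁺ and ŵ(s) = Σ_{k=0}^{n} â_k s^{k−n−1} + O(|log s|) as s → 0⁺. Suppose there exists ε_0 ∈ (0,ε) with φ((0,ε_0)) ⊆ (0,ε̂) and w(r) = ŵ(φ(r)) · φ'(r) for all r ∈ (0,ε_0). Then â_n = a_n. -/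
open Filter Topology Asymptotics Finset

open intervalIntegral

lemma aux_tendsto_pow_log (N : ℕ) (hN : 1 ≤ N) :
    Tendsto (fun ρ : ℝ => ρ ^ N * Real.log ρ) (𝓝[>] (0:ℝ)) (𝓝 0) := by
  have h := tendsto_log_mul_rpow_nhdsGT_zero (r := (N:ℝ)) (by exact_mod_cast hN)
  refine h.congr' ?_
  filter_upwards [self_mem_nhdsWithin] with x (hx : (0:ℝ) < x)
  rw [Real.rpow_natCast]; ring

lemma aux_poly_log : ∀ (n : ℕ) (e : ℕ → ℝ) (C M : ℝ),
    (∀ᶠ ρ in 𝓝[>] (0:ℝ), |(∑ j ∈ range n, e j * ρ^j) * ρ^(-(n:ℤ)) + C * Real.log ρ| ≤ M) →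
    C = 0 := by
  intro n
  induction n with
  | zero =>
    intro e C M h
    by_contra hC
    have hC' : 0 < |C| := abs_pos.mpr hC
    have hlog : Tendsto Real.log (𝓝[>] (0:ℝ)) atBot := Real.tendsto_log_nhdsGT_zero
    have h2 : ∀ᶠ ρ in 𝓝[>] (0:ℝ), Real.log ρ < -((M + 1)/|C|) :=
      hlog.eventually (eventually_lt_atBot _)
    obtain ⟨ρ, h1, h2⟩ := (h.and h2).exists
    simp only [range_zero, sum_empty, zero_mul, zero_add, abs_mul] at h1
    have hM : 0 ≤ M := le_trans (by positivity) h1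
    have hlog2 : (M+1)/|C| ≤ |Real.log ρ| := by
      have : (M+1)/|C| < -Real.log ρ := by linarith
      linarith [neg_le_abs (Real.log ρ)]
    have := mul_le_mul_of_nonneg_left hlog2 hC'.le
    rw [mul_div_cancel₀ _ hC'.ne'] at this
    linarith
  | succ n ih =>
    intro e C M h
    have hpos : ∀ᶠ ρ in 𝓝[>] (0:ℝ), (0:ℝ) < ρ := self_mem_nhdsWithin
    have key : Tendsto (fun ρ : ℝ => (∑ j ∈ range (n+1), e j * ρ^j) + C * (ρ^(n+1) * Real.log ρ))
        (𝓝[>] (0:ℝ)) (𝓝 0) := by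
      have hb : Tendsto (fun ρ : ℝ => ρ^(n+1) *
          ((∑ j ∈ range (n+1), e j * ρ^j) * ρ^(-(n+1:ℕ):ℤ) + C * Real.log ρ)) (𝓝[>](0:ℝ)) (𝓝 0) := by
        refine squeeze_zero_norm' (a := fun ρ => ρ^(n+1) * M) ?_ ?_
        · filter_upwards [h, hpos] with ρ h1 h2
          rw [norm_mul, Real.norm_eq_abs, Real.norm_eq_abs, abs_of_pos (pow_pos h2 _)]
          exact mul_le_mul_of_nonneg_left h1 (pow_pos h2 _).le
        · have hc : Continuous fun ρ : ℝ => ρ^(n+1) * M := by fun_prop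
          have := (hc.tendsto 0).mono_left (nhdsWithin_le_nhds : 𝓝[>](0:ℝ) ≤ 𝓝 0)
          simpa using this
      refine hb.congr' ?_
      filter_upwards [hpos] with ρ h2
      have hρ : (ρ:ℝ)^(n+1) ≠ 0 := pow_ne_zero _ (ne_of_gt h2)
      rw [zpow_neg, zpow_natCast]
      calc ρ^(n+1) * ((∑ j ∈ range (n+1), e j * ρ^j) * (ρ^(n+1))⁻¹ + C * Real.log ρ)
          = (∑ j ∈ range (n+1), e j * ρ^j) * ((ρ^(n+1))⁻¹ * ρ^(n+1))
            + C * (ρ^(n+1) * Real.log ρ) := by ring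
        _ = _ := by rw [inv_mul_cancel₀ hρ, mul_one]
    have hsum : Tendsto (fun ρ : ℝ => (∑ j ∈ range (n+1), e j * ρ^j) + C * (ρ^(n+1) * Real.log ρ))
        (𝓝[>] (0:ℝ)) (𝓝 (e 0)) := by
      have h1 : Continuous fun ρ : ℝ => ∑ j ∈ range (n+1), e j * ρ^j := by
        apply continuous_finset_sum; intro i _; fun_prop
      have h1' := (h1.tendsto 0).mono_left (nhdsWithin_le_nhds : 𝓝[>](0:ℝ) ≤ 𝓝 0)
      have hval : (∑ j ∈ range (n+1), e j * (0:ℝ)^j) = e 0 := by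
        rw [Finset.sum_range_succ' (fun j => e j * (0:ℝ)^j)]
        simp
      rw [hval] at h1'
      have h2 := (aux_tendsto_pow_log (n+1) (by omega)).const_mul C
      have := h1'.add h2
      simpa using this
    have he0 : e 0 = 0 := by
      have := tendsto_nhds_unique hsum key
      linarith
    apply ih (fun j => e (j+1)) C M
    filter_upwards [h, hpos] with ρ h1 h2
    have hρ : ρ ≠ 0 := ne_of_gt h2
    have hs : (∑ x ∈ range n, e (x+1) * ρ^(x+1)) = ρ * ∑ x ∈ range n, e (x+1) * ρ^x := by
      rw [Finset.mul_sum]; exact sum_congr rfl fun i _ => by ring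
    have heq : (∑ j ∈ range (n+1), e j * ρ^j) * ρ^(-(n+1:ℕ):ℤ)
        = (∑ j ∈ range n, e (j+1) * ρ^j) * ρ^(-(n:ℕ):ℤ) := by
      rw [Finset.sum_range_succ' (fun j => e j * ρ^j), he0]
      simp only [zero_mul, add_zero, pow_zero]
      rw [hs, zpow_neg, zpow_neg, zpow_natCast, zpow_natCast]
      field_simp
      ring
    rwa [heq] at h1
noncomputable def Phi (n : ℕ) (b : ℕ → ℝ) (σ : ℝ) : ℝ :=
  ∑ k ∈ range n, b k / ((k:ℝ) - (n:ℝ)) * σ ^ ((k:ℤ) - (n:ℤ)) + b n * Real.log σ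

lemma aux_contOn_P (n : ℕ) (b : ℕ → ℝ) :
    ContinuousOn (fun r : ℝ => ∑ k ∈ range (n+1), b k * r ^ ((k:ℤ) - (n:ℤ) - 1))
      {x : ℝ | x ≠ 0} := by
  apply continuousOn_finset_sum
  intro k _
  intro x hx
  have h1 : ContinuousAt (fun r : ℝ => r ^ ((k:ℤ) - (n:ℤ) - 1)) x := continuousAt_zpow₀ x _ (Or.inl hx)
  exact (continuousAt_const.mul h1).continuousWithinAt

lemma aux_exact_integral (n : ℕ) (b : ℕ → ℝ) (ρ δ : ℝ) (hρ : 0 < ρ) (hρδ : ρ ≤ δ) :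
    ∫ r in ρ..δ, (∑ k ∈ range (n+1), b k * r ^ ((k:ℤ) - (n:ℤ) - 1))
      = Phi n b δ - Phi n b ρ := by
  have huIcc : Set.uIcc ρ δ ⊆ {x : ℝ | x ≠ 0} := by
    rw [Set.uIcc_of_le hρδ]
    intro x hx
    exact ne_of_gt (lt_of_lt_of_le hρ hx.1)
  apply integral_eq_sub_of_hasDerivAt
  · intro x hx
    have hx0 : x ≠ 0 := huIcc hx
    unfold Phi
    have hlog : HasDerivAt Real.log x⁻¹ x := Real.hasDerivAt_log hx0
    have hsum : HasDerivAt (fun σ : ℝ => ∑ k ∈ range n, b k / ((k:ℝ) - n) * σ ^ ((k:ℤ) - (n:ℤ)))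
        (∑ k ∈ range n, b k * x ^ ((k:ℤ) - (n:ℤ) - 1)) x := by
      apply HasDerivAt.fun_sum
      intro k hk
      have hkn : (k:ℝ) - n ≠ 0 := by
        have : k < n := mem_range.mp hk
        have : (k:ℝ) < n := by exact_mod_cast this
        linarith
      have := (hasDerivAt_zpow ((k:ℤ) - n) x (Or.inl hx0)).const_mul (b k / ((k:ℝ) - n))
      convert this using 1
      any_goals rfl
      have : (((k:ℤ) - n : ℤ) : ℝ) = (k:ℝ) - n := by push_cast; ring
      rw [this]
      field_simp
    have := hsum.fun_add (hlog.const_mul (b n))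
    convert this using 1
    rw [Finset.sum_range_succ]
    congr 1
    have : ((n:ℤ) - (n:ℤ) - 1) = (-1 : ℤ) := by ring
    rw [this, zpow_neg_one]
  · exact ((aux_contOn_P n b).mono huIcc).intervalIntegrable

lemma aux_tail_bound (εv δ : ℝ) (hδ0 : 0 < δ) (hδ1 : δ ≤ 1) (hδε : δ < εv)
    (v P : ℝ → ℝ) (hv : ContinuousOn v (Set.Ioo 0 εv)) (hP : ContinuousOn P (Set.Ioo 0 εv))
    (K : ℝ) (hK0 : 0 ≤ K) (hK : ∀ r ∈ Set.Ioc (0:ℝ) δ, |v r - P r| ≤ K * |Real.log r|)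
    (ρ : ℝ) (hρ : ρ ∈ Set.Ioo (0:ℝ) δ) :
    |(∫ r in ρ..δ, v r) - ∫ r in ρ..δ, P r| ≤ K * (δ - δ * Real.log δ) := by
  have hρδ : ρ ≤ δ := hρ.2.le
  have hsub : Set.uIcc ρ δ ⊆ Set.Ioo 0 εv := by
    rw [Set.uIcc_of_le hρδ]
    exact fun x hx => ⟨lt_of_lt_of_le hρ.1 hx.1, lt_of_le_of_lt hx.2 hδε⟩
  have hvint : IntervalIntegrable v MeasureTheory.volume ρ δ := (hv.mono hsub).intervalIntegrable
  have hPint : IntervalIntegrable P MeasureTheory.volume ρ δ := (hP.mono hsub).intervalIntegrable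
  have hdiffint : IntervalIntegrable (fun r => |v r - P r|) MeasureTheory.volume ρ δ :=
    (((hv.mono hsub).sub (hP.mono hsub)).abs).intervalIntegrable
  have hlogint : IntervalIntegrable (fun r => K * (-Real.log r)) MeasureTheory.volume ρ δ := by
    apply ContinuousOn.intervalIntegrable
    apply ContinuousOn.mul continuousOn_const
    apply ContinuousOn.neg
    exact Real.continuousOn_log.mono (fun x hx => ne_of_gt (hsub hx).1)
  rw [← integral_sub hvint hPint]
  calc |∫ r in ρ..δ, (v r - P r)| ≤ ∫ r in ρ..δ, |v r - P r| :=
        abs_integral_le_integral_abs hρδ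
    _ ≤ ∫ r in ρ..δ, K * (-Real.log r) := by
        apply integral_mono_on hρδ hdiffint hlogint
        intro x hx
        have hx' : x ∈ Set.Ioc (0:ℝ) δ := ⟨lt_of_lt_of_le hρ.1 hx.1, hx.2⟩
        refine (hK x hx').trans ?_
        have : Real.log x ≤ 0 := Real.log_nonpos hx'.1.le (hx'.2.trans hδ1)
        rw [abs_of_nonpos this]
    _ = K * (-(δ * Real.log δ - ρ * Real.log ρ - δ + ρ)) := by
        rw [integral_const_mul]
        congr 1
        rw [integral_neg, integral_log]
    _ ≤ K * (δ - δ * Real.log δ) := by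
        apply mul_le_mul_of_nonneg_left _ hK0
        have h1 : Real.log ρ ≤ 0 := Real.log_nonpos hρ.1.le (hρ.2.le.trans hδ1)
        nlinarith [hρ.1, h1]

lemma aux_exp_zpow (x : ℝ) (m : ℤ) : Real.exp x ^ m = Real.exp (m * x) := by
  rw [← Real.rpow_intCast, Real.rpow_def_of_pos (Real.exp_pos x), Real.log_exp, mul_comm]

lemma aux_H_smooth (n : ℕ) (ε : ℝ) (f : ℝ → ℝ) (hf : ContDiffOn ℝ (⊤ : ℕ∞) f (Set.Ico 0 ε))
    (a ahat : ℕ → ℝ) :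
    ContDiffOn ℝ (⊤ : ℕ∞) (fun ρ : ℝ => ∑ k ∈ range n,
      (ahat k / ((k:ℝ) - (n:ℝ)) * Real.exp (((k:ℝ) - (n:ℝ)) * f ρ)
        - a k / ((k:ℝ) - (n:ℝ))) * ρ ^ k) (Set.Ico 0 ε) := by
  apply ContDiffOn.sum
  intro k _
  apply ContDiffOn.mul
  · apply ContDiffOn.sub _ contDiffOn_const
    apply ContDiffOn.mul contDiffOn_const
    exact Real.contDiff_exp.comp_contDiffOn (contDiffOn_const.mul hf)
  · exact (contDiff_id.pow k).contDiffOn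

-- key algebraic expansion of Phi n ahat (exp (f ρ) * ρ) - Phi n a ρ
lemma aux_Phi_expand (n : ℕ) (a ahat : ℕ → ℝ) (f : ℝ → ℝ) (ρ : ℝ) (hρ : 0 < ρ) :
    Phi n ahat (Real.exp (f ρ) * ρ) - Phi n a ρ
      = (∑ k ∈ range n,
          (ahat k / ((k:ℝ) - (n:ℝ)) * Real.exp (((k:ℝ) - (n:ℝ)) * f ρ)
            - a k / ((k:ℝ) - (n:ℝ))) * ρ ^ k) * ρ ^ (-(n:ℤ))
        + (ahat n - a n) * Real.log ρ + ahat n * f ρ := by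
  have hρ0 : ρ ≠ 0 := ne_of_gt hρ
  unfold Phi
  rw [Real.log_mul (Real.exp_ne_zero _) hρ0, Real.log_exp]
  rw [Finset.sum_mul]
  have hterm : ∀ k ∈ range n,
      ahat k / ((k:ℝ) - (n:ℝ)) * (Real.exp (f ρ) * ρ) ^ ((k:ℤ) - (n:ℤ))
        - a k / ((k:ℝ) - (n:ℝ)) * ρ ^ ((k:ℤ) - (n:ℤ))
      = (ahat k / ((k:ℝ) - (n:ℝ)) * Real.exp (((k:ℝ) - (n:ℝ)) * f ρ)
            - a k / ((k:ℝ) - (n:ℝ))) * ρ ^ k * ρ ^ (-(n:ℤ)) := by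
    intro k hk
    have h1 : (Real.exp (f ρ) * ρ) ^ ((k:ℤ) - (n:ℤ))
        = Real.exp (((k:ℝ) - (n:ℝ)) * f ρ) * ρ ^ ((k:ℤ) - (n:ℤ)) := by
      rw [mul_zpow, aux_exp_zpow]
      push_cast
      try ring_nf
    have h2 : ρ ^ ((k:ℤ) - (n:ℤ)) = ρ ^ k * ρ ^ (-(n:ℤ)) := by
      rw [← zpow_natCast ρ k, ← zpow_add₀ hρ0, sub_eq_add_neg]
    rw [h1, h2]
    ring
  have hsum : (∑ k ∈ range n, ahat k / ((k:ℝ) - (n:ℝ)) * (Real.exp (f ρ) * ρ) ^ ((k:ℤ) - (n:ℤ)))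
      - (∑ k ∈ range n, a k / ((k:ℝ) - (n:ℝ)) * ρ ^ ((k:ℤ) - (n:ℤ)))
      = ∑ k ∈ range n, (ahat k / ((k:ℝ) - (n:ℝ)) * Real.exp (((k:ℝ) - (n:ℝ)) * f ρ)
            - a k / ((k:ℝ) - (n:ℝ))) * ρ ^ k * ρ ^ (-(n:ℤ)) := by
    rw [← Finset.sum_sub_distrib]
    exact Finset.sum_congr rfl hterm
  linarith [hsum]

/-- Invariance of the residue (the `r^{-1}`-coefficient) of a density with
expansion `Σ_{k=0}^n a_k r^{k-n-1} + O(|log r|)` under a change of variable of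
the form `r̂ = e^{f(r)} r`: if `w(r) = ŵ(φ(r)) φ'(r)` near `0`, then
`â_n = a_n`. -/
theorem residue_invariant_under_defining_function_change
    (n : ℕ) (hn : 1 ≤ n) (ε εhat : ℝ) (hε : 0 < ε) (hεhat : 0 < εhat)
    (f : ℝ → ℝ) (hf : ContDiffOn ℝ (⊤ : ℕ∞) f (Set.Ico 0 ε))
    (w what : ℝ → ℝ)
    (hw : ContinuousOn w (Set.Ioo 0 ε))
    (hwhat : ContinuousOn what (Set.Ioo 0 εhat))
    (a ahat : ℕ → ℝ)
    (ha : (fun r : ℝ =>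
        w r - ∑ k ∈ range (n + 1), a k * r ^ ((k : ℤ) - (n : ℤ) - 1))
      =O[𝓝[>] (0 : ℝ)] fun r => |Real.log r|)
    (hahat : (fun s : ℝ =>
        what s - ∑ k ∈ range (n + 1), ahat k * s ^ ((k : ℤ) - (n : ℤ) - 1))
      =O[𝓝[>] (0 : ℝ)] fun s => |Real.log s|)
    (hchange : ∃ ε₀ : ℝ, 0 < ε₀ ∧ ε₀ < ε ∧
      (∀ r ∈ Set.Ioo (0 : ℝ) ε₀, Real.exp (f r) * r ∈ Set.Ioo (0 : ℝ) εhat) ∧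
      (∀ r ∈ Set.Ioo (0 : ℝ) ε₀,
        w r = what (Real.exp (f r) * r) *
          deriv (fun s : ℝ => Real.exp (f s) * s) r)) :
    ahat n = a n := by
  obtain ⟨ε₀, hε₀, hε₀ε, hmap, hcv⟩ := hchange
  set φ : ℝ → ℝ := fun r => Real.exp (f r) * r with hφdef
  set f' : ℝ → ℝ := derivWithin f (Set.Ico 0 ε) with hf'def
  set φ' : ℝ → ℝ := fun r => Real.exp (f r) * (f' r * r + 1) with hφ'def
  -- derivative facts
  have hIco_nhds : ∀ r ∈ Set.Ioo (0:ℝ) ε, Set.Ico (0:ℝ) ε ∈ 𝓝 r := fun r hr =>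
    Filter.mem_of_superset (isOpen_Ioo.mem_nhds hr) Set.Ioo_subset_Ico_self
  have hfderiv : ∀ r ∈ Set.Ioo (0:ℝ) ε, HasDerivAt f (f' r) r := by
    intro r hr
    have hd : DifferentiableWithinAt ℝ f (Set.Ico 0 ε) r :=
      (hf.differentiableOn (by simp)) r ⟨hr.1.le, hr.2⟩
    exact hd.hasDerivWithinAt.hasDerivAt (hIco_nhds r hr)
  have hφderiv : ∀ r ∈ Set.Ioo (0:ℝ) ε, HasDerivAt φ (φ' r) r := by
    intro r hr
    have h := ((hfderiv r hr).exp.fun_mul (hasDerivAt_id r))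
    convert h using 1
    any_goals rfl
    simp only [hφ'def, id_eq, mul_one]
    ring
  have hφ'cont : ContinuousOn φ' (Set.Ioo 0 ε) := by
    have h1 : ContinuousOn f' (Set.Ico 0 ε) :=
      (hf.derivWithin (m := (⊤ : ℕ∞)) (uniqueDiffOn_Ico 0 ε) (by simp)).continuousOn
    have h2 : ContinuousOn f (Set.Ico 0 ε) := hf.continuousOn
    apply ContinuousOn.mul
    · exact Real.continuous_exp.comp_continuousOn (h2.mono Set.Ioo_subset_Ico_self)
    · exact ((h1.mono Set.Ioo_subset_Ico_self).mul continuousOn_id).add continuousOn_const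
  have hφcongr : ∀ r ∈ Set.Ioo (0:ℝ) ε₀, w r = what (φ r) * φ' r := by
    intro r hr
    rw [hcv r hr, (hφderiv r ⟨hr.1, hr.2.trans hε₀ε⟩).deriv]
  -- tendsto of φ
  have hfc0 : ContinuousWithinAt f (Set.Ico 0 ε) 0 := hf.continuousOn 0 ⟨le_rfl, hε⟩
  have hle : 𝓝[>] (0:ℝ) ≤ 𝓝[Set.Ico 0 ε] 0 :=
    le_trans (nhdsWithin_le_of_mem (Ioo_mem_nhdsGT_of_mem ⟨le_rfl, hε⟩))
      (nhdsWithin_mono 0 Set.Ioo_subset_Ico_self)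
  have hft : Tendsto f (𝓝[>] (0:ℝ)) (𝓝 (f 0)) := hfc0.mono_left hle
  have hφt : Tendsto φ (𝓝[>] (0:ℝ)) (𝓝[>] (0:ℝ)) := by
    rw [tendsto_nhdsWithin_iff]
    constructor
    · have h1 : Tendsto (fun r:ℝ => r) (𝓝[>] (0:ℝ)) (𝓝 0) :=
        tendsto_id.mono_right nhdsWithin_le_nhds
      have := ((Real.continuous_exp.tendsto (f 0)).comp hft).mul h1
      simpa using this
    · filter_upwards [self_mem_nhdsWithin] with r hr
      exact mul_pos (Real.exp_pos _) hr
  -- bounds from big-O hypotheses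
  obtain ⟨c₁, hc₁⟩ := ha.bound
  obtain ⟨u₁, hu₁mem, hu₁sub⟩ := mem_nhdsGT_iff_exists_Ioo_subset.mp hc₁
  obtain ⟨c₂, hc₂⟩ := hahat.bound
  obtain ⟨u₂, hu₂mem, hu₂sub⟩ := mem_nhdsGT_iff_exists_Ioo_subset.mp hc₂
  set K₁ : ℝ := |c₁| with hK₁def
  set K₂ : ℝ := |c₂| with hK₂def
  have hK₁bd : ∀ r ∈ Set.Ioo (0:ℝ) u₁,
      |w r - ∑ k ∈ range (n + 1), a k * r ^ ((k : ℤ) - (n : ℤ) - 1)| ≤ K₁ * |Real.log r| := by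
    intro r hr
    have := hu₁sub hr
    simp only [Set.mem_setOf_eq, Real.norm_eq_abs, abs_abs] at this
    exact this.trans (mul_le_mul_of_nonneg_right (le_abs_self c₁) (abs_nonneg _))
  have hK₂bd : ∀ s ∈ Set.Ioo (0:ℝ) u₂,
      |what s - ∑ k ∈ range (n + 1), ahat k * s ^ ((k : ℤ) - (n : ℤ) - 1)|
        ≤ K₂ * |Real.log s| := by
    intro s hs
    have := hu₂sub hs
    simp only [Set.mem_setOf_eq, Real.norm_eq_abs, abs_abs] at this
    exact this.trans (mul_le_mul_of_nonneg_right (le_abs_self c₂) (abs_nonneg _))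
  -- choice of δ̂
  set δh : ℝ := min u₂ (min 1 εhat) / 2 with hδhdef
  have hδhpos : 0 < δh := by
    have := hu₂mem
    simp only [Set.mem_Ioi] at this
    positivity
  have hδh1 : δh ≤ 1 := by
    have h := min_le_right u₂ (min 1 εhat)
    have h2 := min_le_left (1:ℝ) εhat
    simp only [hδhdef]; linarith
  have hδhεhat : δh < εhat := by
    have h := min_le_right u₂ (min 1 εhat)
    have h2 := min_le_right (1:ℝ) εhat
    simp only [hδhdef]; linarith
  have hδhu₂ : δh < u₂ := by
    have h := min_le_left u₂ (min 1 εhat)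
    have := hu₂mem
    simp only [Set.mem_Ioi] at this
    simp only [hδhdef]; linarith
  -- choice of δ
  obtain ⟨u₃, hu₃mem, hu₃sub⟩ := mem_nhdsGT_iff_exists_Ioo_subset.mp
    (hφt (Ioo_mem_nhdsGT_of_mem ⟨le_rfl, hδhpos⟩))
  set δ : ℝ := min (min u₁ u₃) (min 1 ε₀) / 2 with hδdef
  have hu₁pos : (0:ℝ) < u₁ := hu₁mem
  have hu₃pos : (0:ℝ) < u₃ := hu₃mem
  have hδpos : 0 < δ := by simp only [hδdef]; positivity
  have hδ1 : δ ≤ 1 := by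
    have h := min_le_right (min u₁ u₃) (min 1 ε₀)
    have h2 := min_le_left (1:ℝ) ε₀
    simp only [hδdef]; linarith
  have hδε₀ : δ < ε₀ := by
    have h := min_le_right (min u₁ u₃) (min 1 ε₀)
    have h2 := min_le_right (1:ℝ) ε₀
    simp only [hδdef]; linarith
  have hδε : δ < ε := hδε₀.trans hε₀ε
  have hδu₁ : δ < u₁ := by
    have h := min_le_left (min u₁ u₃) (min 1 ε₀)
    have h2 := min_le_left u₁ u₃
    simp only [hδdef]; linarith
  have hδu₃ : δ < u₃ := by
    have h := min_le_left (min u₁ u₃) (min 1 ε₀)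
    have h2 := min_le_right u₁ u₃
    simp only [hδdef]; linarith
  have hφIoo : ∀ ρ ∈ Set.Ioc (0:ℝ) δ, φ ρ ∈ Set.Ioo (0:ℝ) δh := by
    intro ρ hρ
    exact hu₃sub ⟨hρ.1, lt_of_le_of_lt hρ.2 hδu₃⟩
  -- continuity of the model expansions
  have hPa : ContinuousOn (fun r : ℝ => ∑ k ∈ range (n+1), a k * r ^ ((k:ℤ) - (n:ℤ) - 1))
      (Set.Ioo 0 ε) := (aux_contOn_P n a).mono (fun x hx => ne_of_gt hx.1)
  have hPahat : ContinuousOn (fun s : ℝ => ∑ k ∈ range (n+1), ahat k * s ^ ((k:ℤ) - (n:ℤ) - 1))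
      (Set.Ioo 0 εhat) := (aux_contOn_P n ahat).mono (fun x hx => ne_of_gt hx.1)
  set M₁ : ℝ := K₁ * (δ - δ * Real.log δ) with hM₁def
  set M₂ : ℝ := K₂ * (δh - δh * Real.log δh) with hM₂def
  set C₀ : ℝ := Phi n ahat (φ δ) - Phi n a δ with hC₀def
  -- the key integral estimate
  have hkey : ∀ ρ ∈ Set.Ioo (0:ℝ) δ,
      |Phi n ahat (φ ρ) - Phi n a ρ - C₀| ≤ M₁ + M₂ + M₂ := by
    intro ρ hρ
    have hρδ : ρ ≤ δ := hρ.2.le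
    -- E1
    have hE1 : |(∫ r in ρ..δ, w r) - (Phi n a δ - Phi n a ρ)| ≤ M₁ := by
      rw [← aux_exact_integral n a ρ δ hρ.1 hρδ]
      exact aux_tail_bound ε δ hδpos hδ1 hδε w _ hw hPa K₁ (abs_nonneg _)
        (fun r hr => hK₁bd r ⟨hr.1, lt_of_le_of_lt hr.2 hδu₁⟩) ρ hρ
    -- change of variables
    have hsubIcc : Set.uIcc ρ δ ⊆ Set.Ioo (0:ℝ) ε₀ := by
      rw [Set.uIcc_of_le hρδ]
      exact fun x hx => ⟨lt_of_lt_of_le hρ.1 hx.1, lt_of_le_of_lt hx.2 hδε₀⟩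
    have hAB : (∫ r in ρ..δ, w r) = ∫ s in (φ ρ)..(φ δ), what s := by
      have h1 : Set.EqOn w (fun r => φ' r • (what ∘ φ) r) (Set.uIcc ρ δ) := by
        intro x hx
        have := hφcongr x (hsubIcc hx)
        simp only [Function.comp_apply, smul_eq_mul]
        rw [this]; ring
      rw [integral_congr h1]
      apply integral_comp_smul_deriv'
      · exact fun x hx => hφderiv x ⟨(hsubIcc hx).1, (hsubIcc hx).2.trans hε₀ε⟩
      · exact hφ'cont.mono (fun x hx => ⟨(hsubIcc hx).1, (hsubIcc hx).2.trans hε₀ε⟩)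
      · exact hwhat.mono (by
          intro y hy
          obtain ⟨x, hx, rfl⟩ := hy
          exact hmap x (hsubIcc hx))
    have hφρmem : φ ρ ∈ Set.Ioo (0:ℝ) δh := hφIoo ρ ⟨hρ.1, hρδ⟩
    have hφδmem : φ δ ∈ Set.Ioo (0:ℝ) δh := hφIoo δ ⟨hδpos, le_rfl⟩
    have hwhatii : ∀ x y : ℝ, x ∈ Set.Ioo (0:ℝ) εhat → y ∈ Set.Ioo (0:ℝ) εhat →
        IntervalIntegrable what MeasureTheory.volume x y := by
      intro x y hx hy
      exact (hwhat.mono ((Set.ordConnected_Ioo).uIcc_subset hx hy)).intervalIntegrable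
    have hδhmem : δh ∈ Set.Ioo (0:ℝ) εhat := ⟨hδhpos, hδhεhat⟩
    have hφρε : φ ρ ∈ Set.Ioo (0:ℝ) εhat := ⟨hφρmem.1, hφρmem.2.trans hδhεhat⟩
    have hφδε : φ δ ∈ Set.Ioo (0:ℝ) εhat := ⟨hφδmem.1, hφδmem.2.trans hδhεhat⟩
    have hsplit : (∫ s in (φ ρ)..(φ δ), what s)
        = (∫ s in (φ ρ)..δh, what s) - (∫ s in (φ δ)..δh, what s) := by
      have := integral_add_adjacent_intervals
        (hwhatii _ _ hφρε hφδε) (hwhatii _ _ hφδε hδhmem)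
      linarith [this]
    have hE2 : |(∫ s in (φ ρ)..δh, what s) - (Phi n ahat δh - Phi n ahat (φ ρ))| ≤ M₂ := by
      rw [← aux_exact_integral n ahat (φ ρ) δh hφρmem.1 hφρmem.2.le]
      exact aux_tail_bound εhat δh hδhpos hδh1 hδhεhat what _ hwhat hPahat K₂ (abs_nonneg _)
        (fun s hs => hK₂bd s ⟨hs.1, lt_of_le_of_lt hs.2 hδhu₂⟩) (φ ρ) hφρmem
    have hE3 : |(∫ s in (φ δ)..δh, what s) - (Phi n ahat δh - Phi n ahat (φ δ))| ≤ M₂ := by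
      rw [← aux_exact_integral n ahat (φ δ) δh hφδmem.1 hφδmem.2.le]
      exact aux_tail_bound εhat δh hδhpos hδh1 hδhεhat what _ hwhat hPahat K₂ (abs_nonneg _)
        (fun s hs => hK₂bd s ⟨hs.1, lt_of_le_of_lt hs.2 hδhu₂⟩) (φ δ) hφδmem
    rw [abs_le] at hE1 hE2 hE3 ⊢
    rw [hAB, hsplit] at hE1
    constructor <;> [linarith [hE1.1, hE2.2, hE3.1]; linarith [hE1.2, hE2.1, hE3.2]]
  -- bound on |f| over Icc 0 δ
  have hIccIco : Set.Icc (0:ℝ) δ ⊆ Set.Ico 0 ε :=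
    fun x hx => ⟨hx.1, lt_of_le_of_lt hx.2 hδε⟩
  obtain ⟨Mf, hMf⟩ := (isCompact_Icc).exists_bound_of_continuousOn
    (hf.continuousOn.mono hIccIco)
  set H : ℝ → ℝ := fun ρ => ∑ k ∈ range n,
      (ahat k / ((k:ℝ) - (n:ℝ)) * Real.exp (((k:ℝ) - (n:ℝ)) * f ρ)
        - a k / ((k:ℝ) - (n:ℝ))) * ρ ^ k with hHdef
  set M₃ : ℝ := (M₁ + M₂ + M₂) + |C₀| + |ahat n| * Mf with hM₃def
  have hbound2 : ∀ ρ ∈ Set.Ioo (0:ℝ) δ,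
      |H ρ * ρ ^ (-(n:ℤ)) + (ahat n - a n) * Real.log ρ| ≤ M₃ := by
    intro ρ hρ
    have hk := hkey ρ hρ
    have hex := aux_Phi_expand n a ahat f ρ hρ.1
    have heq : H ρ * ρ ^ (-(n:ℤ)) + (ahat n - a n) * Real.log ρ
        = (Phi n ahat (φ ρ) - Phi n a ρ - C₀) + C₀ - ahat n * f ρ := by
      rw [show φ ρ = Real.exp (f ρ) * ρ from rfl, hex]
      ring
    have hfρ := hMf ρ ⟨hρ.1.le, hρ.2.le⟩
    rw [Real.norm_eq_abs] at hfρ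
    have h3 : |ahat n * f ρ| ≤ |ahat n| * Mf := by
      rw [abs_mul]
      exact mul_le_mul_of_nonneg_left hfρ (abs_nonneg _)
    rw [heq, abs_le]
    rw [abs_le] at hk h3
    constructor <;> [skip; skip] <;>
      simp only [hM₃def] <;>
      linarith [le_abs_self C₀, neg_abs_le C₀, hk.1, hk.2, h3.1, h3.2]
  -- Taylor expansion of H
  have hn1 : n - 1 + 1 = n := Nat.succ_pred_eq_of_pos hn
  have hHsm := aux_H_smooth n ε f hf a ahat
  have hHc : ContDiffOn ℝ ((n - 1 : ℕ) + 1 : ℕ) H (Set.Icc 0 δ) :=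
    (hHsm.of_le (by exact WithTop.coe_le_coe.mpr (le_top : ((n - 1 + 1 : ℕ) : ℕ∞) ≤ ⊤))).mono hIccIco
  obtain ⟨CT, hCT⟩ := exists_taylor_mean_remainder_bound hδpos.le hHc
  set e : ℕ → ℝ := fun j => ((j.factorial : ℝ))⁻¹ * iteratedDerivWithin j H (Set.Icc 0 δ) 0
    with hedef
  have htay : ∀ x : ℝ, taylorWithinEval H (n-1) (Set.Icc 0 δ) 0 x
      = ∑ j ∈ range n, e j * x ^ j := by
    intro x
    rw [taylor_within_apply, hn1]
    apply Finset.sum_congr rfl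
    intro j _
    simp only [hedef, smul_eq_mul, sub_zero]
    ring
  have hfinal : ∀ᶠ ρ in 𝓝[>] (0:ℝ),
      |(∑ j ∈ range n, e j * ρ ^ j) * ρ ^ (-(n:ℤ)) + (ahat n - a n) * Real.log ρ|
        ≤ M₃ + |CT| := by
    filter_upwards [Ioo_mem_nhdsGT hδpos] with ρ hρ
    have h1 := hbound2 ρ hρ
    have h2 : ‖H ρ - taylorWithinEval H (n-1) (Set.Icc 0 δ) 0 ρ‖ ≤ CT * (ρ - 0) ^ ((n-1) + 1) :=
      hCT ρ ⟨hρ.1.le, hρ.2.le⟩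
    rw [htay, hn1, sub_zero, Real.norm_eq_abs] at h2
    have hρn : (0:ℝ) < ρ ^ n := pow_pos hρ.1 n
    have hzpow : ρ ^ (-(n:ℤ)) = (ρ ^ n)⁻¹ := by
      rw [zpow_neg, zpow_natCast]
    have hb3 : |(H ρ - ∑ j ∈ range n, e j * ρ ^ j) * ρ ^ (-(n:ℤ))| ≤ |CT| := by
      rw [abs_mul, hzpow, abs_of_pos (inv_pos.mpr hρn)]
      have h4 : |H ρ - ∑ j ∈ range n, e j * ρ ^ j| ≤ |CT| * ρ ^ n :=
        h2.trans (mul_le_mul_of_nonneg_right (le_abs_self CT) hρn.le)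
      calc |H ρ - ∑ j ∈ range n, e j * ρ ^ j| * (ρ ^ n)⁻¹
          ≤ (|CT| * ρ ^ n) * (ρ ^ n)⁻¹ :=
            mul_le_mul_of_nonneg_right h4 (inv_pos.mpr hρn).le
        _ = |CT| := by field_simp
    calc |(∑ j ∈ range n, e j * ρ ^ j) * ρ ^ (-(n:ℤ)) + (ahat n - a n) * Real.log ρ|
        = |(H ρ * ρ ^ (-(n:ℤ)) + (ahat n - a n) * Real.log ρ)
            - (H ρ - ∑ j ∈ range n, e j * ρ ^ j) * ρ ^ (-(n:ℤ))| := by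
          congr 1
          ring
      _ ≤ |H ρ * ρ ^ (-(n:ℤ)) + (ahat n - a n) * Real.log ρ|
            + |(H ρ - ∑ j ∈ range n, e j * ρ ^ j) * ρ ^ (-(n:ℤ))| := abs_sub _ _
      _ ≤ M₃ + |CT| := add_le_add h1 hb3
  have hzero := aux_poly_log n e (ahat n - a n) (M₃ + |CT|) hfinal
  linarith
end

section
/- Let E be a real normed vector space, let n ≥ 1 be a natural number, and let F : ℝ → E be of class C^{n+2} with F(0) = 0. Define u_k = F^{(k)}(0) / (k! · k · (n−k+1)) for 1 ≤ k ≤ n, p = − F^{(n+1)}(0) / ((n+1)! · (n+1)), and u(r) = Σ_{k=1}^{n} u_k r^k + p r^{n+1} log r for r > 0. Then, as r → 0⁺, n r u'(r) − r² u''(r) − F(r) = O(r^{n+2}). Moreover (u_1, …, u_n, p) is the unique tuple of vectors in E for which the function of this form satisfies this estimate. -/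
open Filter Topology Asymptotics Finset

/-!
With `θ = r d/dr` the operator is `L = (n + 1) θ - θ²`, so `L (r ^ k) = k (n - k + 1) r ^ k` and
`L (r ^ (n + 1) log r) = -(n + 1) r ^ (n + 1)`. Hence for `r > 0`, `L u` is a polynomial of degree
`n + 1` whose `k`-th coefficient is `k (n - k + 1) u_k` for `k ≤ n` and `-(n + 1) p` for
`k = n + 1`. By Taylor's theorem `F` is its Taylor polynomial of degree `n + 1` up to
`O(r ^ (n + 2))`, and a polynomial of degree `≤ n + 1` that is `O(r ^ (n + 2))` as `r → 0⁺` is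
zero. So the estimate holds exactly when these coefficients are the Taylor coefficients of `F`;
as `k (n - k + 1) ≠ 0` for `1 ≤ k ≤ n` and `F 0 = 0`, this pins down `(u_1, …, u_n, p)`.
-/

/-- The model indicial operator `L u (r) = n r u'(r) - r² u''(r)`. -/
noncomputable def modelOp {E : Type*} [NormedAddCommGroup E] [NormedSpace ℝ E]
    (n : ℕ) (u : ℝ → E) : ℝ → E :=
  fun r => ((n : ℝ) * r) • deriv u r - (r ^ 2) • deriv (deriv u) r

/-- The model solution `u(r) = Σ_{k=1}^n u_k r^k + p r^{n+1} log r` built from a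
tuple of coefficients `(u_1, …, u_n, p)`. -/
noncomputable def modelSol {E : Type*} [NormedAddCommGroup E] [NormedSpace ℝ E]
    (n : ℕ) (u : ℕ → E) (p : E) : ℝ → E :=
  fun r => (∑ k ∈ Icc 1 n, (r ^ k) • u k) + (r ^ (n + 1) * Real.log r) • p

section Taylor

variable {E : Type*} [NormedAddCommGroup E] [NormedSpace ℝ E]

theorem taylorWithinEval_eq_sum (f : ℝ → E) (n : ℕ) (s : Set ℝ) (x₀ x : ℝ) :
    taylorWithinEval f n s x₀ x =
      ∑ k ∈ range (n + 1), (x - x₀) ^ k • taylorCoeffWithin f k s x₀ := by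
  simp only [taylor_within_apply, taylorCoeffWithin, smul_smul, mul_comm]

theorem taylor_isBigO_univ {f : ℝ → E} {x₀ : ℝ} {n : ℕ} (hf : ContDiff ℝ (n + 1) f) :
    (fun x ↦ f x - taylorWithinEval f n Set.univ x₀ x) =O[𝓝 x₀] fun x ↦ (x - x₀) ^ (n + 1) := by
  have hrem := (taylor_isLittleO_univ (x₀ := x₀) (n := n + 1) (by exact_mod_cast hf)).isBigO
  have hterm : (fun x ↦ (((n + 1 : ℝ) * n.factorial)⁻¹ * (x - x₀) ^ (n + 1)) •
      iteratedDerivWithin (n + 1) f Set.univ x₀) =O[𝓝 x₀] fun x ↦ (x - x₀) ^ (n + 1) := by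
    simpa using ((isBigO_refl (fun x : ℝ ↦ (x - x₀) ^ (n + 1)) (𝓝 x₀)).const_mul_left _).smul
      (isBigO_const_const (iteratedDerivWithin (n + 1) f Set.univ x₀) (one_ne_zero (α := ℝ)) (𝓝 x₀))
  refine (hrem.add hterm).congr_left fun x ↦ ?_
  rw [taylorWithinEval_succ]
  abel

end Taylor

theorem eq_zero_of_sum_pow_smul_isBigO {𝕜 E : Type*} [NormedField 𝕜] [NormedAddCommGroup E]
    [NormedSpace 𝕜 E] {l : Filter 𝕜} [l.NeBot] (hl : l ≤ 𝓝[≠] 0) {N : ℕ} {c : ℕ → E}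
    (h : (fun x ↦ ∑ k ∈ range N, x ^ k • c k) =O[l] fun x ↦ x ^ N) : ∀ k < N, c k = 0 := by
  induction N generalizing c with
  | zero => simp
  | succ N ih =>
    have hsplit (x : 𝕜) :
        ∑ k ∈ range (N + 1), x ^ k • c k = c 0 + x • ∑ k ∈ range N, x ^ k • c (k + 1) := by
      simp only [sum_range_succ', smul_sum, smul_smul, pow_succ', pow_zero, one_smul, add_comm]
    have hl0 : Tendsto id l (𝓝 0) := hl.trans nhdsWithin_le_nhds
    have hc0 : c 0 = 0 := by
      have hcont : Continuous fun x : 𝕜 ↦ ∑ k ∈ range (N + 1), x ^ k • c k := by fun_prop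
      have h0 : Tendsto (fun x : 𝕜 ↦ x ^ (N + 1)) l (𝓝 0) := by
        simpa using ((continuous_pow (N + 1)).tendsto 0).comp hl0
      refine tendsto_nhds_unique ?_ (h.trans_tendsto h0)
      simpa [hsplit] using (hcont.tendsto 0).comp hl0
    have hne : ∀ᶠ x in l, x ≠ 0 := hl self_mem_nhdsWithin
    have hshift : (fun x ↦ ∑ k ∈ range N, x ^ k • c (k + 1)) =O[l] fun x ↦ x ^ N := by
      refine ((isBigO_refl (fun x : 𝕜 ↦ x⁻¹) l).smul h).congr' ?_ ?_
      · filter_upwards [hne] with x hx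
        rw [hsplit, hc0, zero_add, smul_smul, inv_mul_cancel₀ hx, one_smul]
      · filter_upwards [hne] with x hx
        rw [pow_succ', smul_eq_mul, inv_mul_cancel_left₀ hx]
    rintro (_ | k) hk
    · exact hc0
    · exact ih hshift k (by omega)

theorem hasDerivAt_pow_euler {𝕜 : Type*} [NontriviallyNormedField 𝕜] (k : ℕ) {x : 𝕜}
    (hx : x ≠ 0) : HasDerivAt (fun x ↦ x ^ k) (x⁻¹ * (k * x ^ k)) x := by
  convert hasDerivAt_pow k x using 1
  rcases k with _ | k
  · simp
  · rw [pow_succ', Nat.add_sub_cancel]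
    field_simp

theorem Real.hasDerivAt_pow_mul_log_euler (k : ℕ) {x : ℝ} (hx : x ≠ 0) :
    HasDerivAt (fun x ↦ x ^ k * Real.log x) (x⁻¹ * (k * (x ^ k * Real.log x) + x ^ k)) x := by
  refine ((hasDerivAt_pow_euler k hx).fun_mul (Real.hasDerivAt_log hx)).congr_deriv ?_
  field_simp

section ModelOp

variable {E : Type*} [NormedAddCommGroup E] [NormedSpace ℝ E]

-- `a = θ u` and `b = θ a`, so this is `L = (n + 1) θ - θ²`.
theorem modelOp_eq_of_hasDerivAt_euler (n : ℕ) {u a b : ℝ → E}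
    (hu : ∀ x > 0, HasDerivAt u (x⁻¹ • a x) x) (ha : ∀ x > 0, HasDerivAt a (x⁻¹ • b x) x)
    {r : ℝ} (hr : 0 < r) : modelOp n u r = ((n : ℝ) + 1) • a r - b r := by
  have hderiv : deriv u =ᶠ[𝓝 r] fun x ↦ x⁻¹ • a x := by
    filter_upwards [Ioi_mem_nhds hr] with x hx using (hu x hx).deriv
  have hderiv2 := (hasDerivAt_inv hr.ne').fun_smul (ha r hr)
  rw [modelOp, hderiv.eq_of_nhds, hderiv.deriv_eq, hderiv2.deriv]
  match_scalars
  · field_simp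
    ring
  · field_simp

theorem hasDerivAt_modelSol (n : ℕ) (v : ℕ → E) (q : E) {x : ℝ} (hx : x ≠ 0) :
    HasDerivAt (modelSol n v q) (x⁻¹ • (∑ k ∈ Icc 1 n, ((k : ℝ) * x ^ k) • v k
      + (((n : ℝ) + 1) * (x ^ (n + 1) * Real.log x) + x ^ (n + 1)) • q)) x := by
  refine ((HasDerivAt.fun_sum (u := Icc 1 n) fun k _ ↦
    (hasDerivAt_pow_euler k hx).smul_const (v k)).fun_add
    ((Real.hasDerivAt_pow_mul_log_euler (n + 1) hx).smul_const q)).congr_deriv ?_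
  rw [smul_add, smul_sum]
  congr 1
  · exact sum_congr rfl fun k _ ↦ by rw [smul_smul]
  · push_cast
    rw [smul_smul]

theorem hasDerivAt_euler_modelSol (n : ℕ) (v : ℕ → E) (q : E) {x : ℝ} (hx : x ≠ 0) :
    HasDerivAt (fun x ↦ ∑ k ∈ Icc 1 n, ((k : ℝ) * x ^ k) • v k
        + (((n : ℝ) + 1) * (x ^ (n + 1) * Real.log x) + x ^ (n + 1)) • q)
      (x⁻¹ • (∑ k ∈ Icc 1 n, ((k : ℝ) * ((k : ℝ) * x ^ k)) • v k
        + (((n : ℝ) + 1) * (((n : ℝ) + 1) * (x ^ (n + 1) * Real.log x) + x ^ (n + 1))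
          + ((n : ℝ) + 1) * x ^ (n + 1)) • q)) x := by
  refine ((HasDerivAt.fun_sum (u := Icc 1 n) fun k _ ↦
    ((hasDerivAt_pow_euler k hx).const_mul (k : ℝ)).smul_const (v k)).fun_add
    ((((Real.hasDerivAt_pow_mul_log_euler (n + 1) hx).const_mul ((n : ℝ) + 1)).fun_add
      (hasDerivAt_pow_euler (n + 1) hx)).smul_const q)).congr_deriv ?_
  rw [smul_add, smul_sum]
  congr 1
  · refine sum_congr rfl fun k _ ↦ ?_
    rw [smul_smul]
    congr 1
    ring
  · push_cast
    rw [smul_smul]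
    congr 1
    ring

theorem modelOp_modelSol (n : ℕ) (v : ℕ → E) (q : E) {r : ℝ} (hr : 0 < r) :
    modelOp n (modelSol n v q) r =
      ∑ k ∈ Icc 1 n, ((k : ℝ) * ((n : ℝ) - k + 1) * r ^ k) • v k
        - (((n : ℝ) + 1) * r ^ (n + 1)) • q := by
  rw [modelOp_eq_of_hasDerivAt_euler n (fun x hx ↦ hasDerivAt_modelSol n v q hx.ne')
    (fun x hx ↦ hasDerivAt_euler_modelSol n v q hx.ne') hr, smul_add, smul_sum,
    add_sub_add_comm, ← sum_sub_distrib]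
  conv_rhs => rw [sub_eq_add_neg, ← neg_smul]
  congr 1
  · refine sum_congr rfl fun k _ ↦ ?_
    rw [smul_smul, ← sub_smul]
    congr 1
    ring
  · rw [smul_smul, ← sub_smul]
    congr 1
    ring

noncomputable def modelOpCoeff (n : ℕ) (v : ℕ → E) (q : E) (k : ℕ) : E :=
  if k = n + 1 then (-((n : ℝ) + 1)) • q else ((k : ℝ) * ((n : ℝ) - k + 1)) • v k

theorem modelOp_modelSol_eq_sum (n : ℕ) (v : ℕ → E) (q : E) {r : ℝ} (hr : 0 < r) :
    modelOp n (modelSol n v q) r = ∑ k ∈ range (n + 2), r ^ k • modelOpCoeff n v q k := by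
  have h0 : modelOpCoeff n v q 0 = 0 := by simp [modelOpCoeff]
  have hmid : ∀ k ∈ Icc 1 n,
      r ^ k • modelOpCoeff n v q k = ((k : ℝ) * ((n : ℝ) - k + 1) * r ^ k) • v k := by
    intro k hk
    rw [modelOpCoeff, if_neg (by simp at hk; omega), smul_smul, mul_comm]
  have htop : modelOpCoeff n v q (n + 1) = (-((n : ℝ) + 1)) • q := if_pos rfl
  rw [modelOp_modelSol n v q hr, range_eq_Ico, sum_eq_sum_Ico_succ_bot (by omega),
    sum_Ico_succ_top (by omega), Ico_add_one_right_eq_Icc, sum_congr rfl hmid, h0, htop,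
    smul_zero, zero_add, smul_smul, sub_eq_add_neg, ← neg_smul, mul_neg, mul_comm]

theorem modelOp_modelSol_sub_isBigO_iff {n : ℕ} {F : ℝ → E} (hF : ContDiff ℝ (n + 2) F)
    (v : ℕ → E) (q : E) :
    ((fun r ↦ modelOp n (modelSol n v q) r - F r) =O[𝓝[>] (0 : ℝ)] fun r ↦ r ^ (n + 2)) ↔
      ∀ k < n + 2, modelOpCoeff n v q k = taylorCoeffWithin F k Set.univ 0 := by
  set T : ℝ → E := fun r ↦ ∑ k ∈ range (n + 2), r ^ k • taylorCoeffWithin F k Set.univ 0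
  set c : ℕ → E := fun k ↦ modelOpCoeff n v q k - taylorCoeffWithin F k Set.univ 0
  have htaylor : (fun r ↦ F r - T r) =O[𝓝[>] (0 : ℝ)] fun r ↦ r ^ (n + 2) := by
    have h := (taylor_isBigO_univ (x₀ := 0) (n := n + 1) (by exact_mod_cast hF)).mono
      (nhdsWithin_le_nhds (s := Set.Ioi 0))
    simpa only [taylorWithinEval_eq_sum, sub_zero] using h
  have hsplit : (fun r ↦ modelOp n (modelSol n v q) r - F r) =ᶠ[𝓝[>] (0 : ℝ)]
      fun r ↦ ∑ k ∈ range (n + 2), r ^ k • c k - (F r - T r) := by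
    filter_upwards [self_mem_nhdsWithin] with r hr
    simp only [modelOp_modelSol_eq_sum n v q hr, c, T, smul_sub, sum_sub_distrib]
    abel
  rw [isBigO_congr hsplit EventuallyEq.rfl, htaylor.sub_iff_left]
  constructor
  · intro h k hk
    exact sub_eq_zero.mp
      (eq_zero_of_sum_pow_smul_isBigO (nhdsGT_le_nhdsNE 0) h k hk)
  · intro h
    refine (isBigO_zero _ _).congr_left fun r ↦ (sum_eq_zero fun k hk ↦ ?_).symm
    rw [show c k = 0 from sub_eq_zero.mpr (h k (mem_range.mp hk)), smul_zero]

theorem modelOpCoeff_eq_taylorCoeffWithin_iff {n k : ℕ} (hk : 1 ≤ k) (hkn : k ≤ n)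
    (F : ℝ → E) (v : ℕ → E) (q : E) :
    modelOpCoeff n v q k = taylorCoeffWithin F k Set.univ 0 ↔
      v k = ((k.factorial : ℝ) * k * ((n : ℝ) - k + 1))⁻¹ • iteratedDeriv k F 0 := by
  have hfac : (k.factorial : ℝ) ≠ 0 := Nat.cast_ne_zero.mpr k.factorial_ne_zero
  have hind : (k : ℝ) * ((n : ℝ) - k + 1) ≠ 0 := by
    have : (k : ℝ) ≤ n := by exact_mod_cast hkn
    exact mul_ne_zero (by positivity) (by linarith)
  rw [modelOpCoeff, if_neg (by omega), taylorCoeffWithin, iteratedDerivWithin_univ,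
    eq_inv_smul_iff₀ hfac, mul_assoc, eq_inv_smul_iff₀ (mul_ne_zero hfac hind), smul_smul]

theorem modelOpCoeff_top_eq_taylorCoeffWithin_iff (n : ℕ) (F : ℝ → E) (v : ℕ → E) (q : E) :
    modelOpCoeff n v q (n + 1) = taylorCoeffWithin F (n + 1) Set.univ 0 ↔
      q = -(((n + 1).factorial : ℝ) * ((n : ℝ) + 1))⁻¹ • iteratedDeriv (n + 1) F 0 := by
  have hfac : ((n + 1).factorial : ℝ) ≠ 0 := Nat.cast_ne_zero.mpr (n + 1).factorial_ne_zero
  rw [modelOpCoeff, if_pos rfl, taylorCoeffWithin, iteratedDerivWithin_univ,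
    eq_inv_smul_iff₀ hfac, neg_inv, eq_inv_smul_iff₀ (neg_ne_zero.mpr (by positivity)),
    smul_smul, mul_neg]

theorem forall_modelOpCoeff_eq_taylorCoeffWithin_iff {n : ℕ} {F : ℝ → E} (hF0 : F 0 = 0)
    (v : ℕ → E) (q : E) :
    (∀ k < n + 2, modelOpCoeff n v q k = taylorCoeffWithin F k Set.univ 0) ↔
      (∀ k, 1 ≤ k → k ≤ n →
        v k = ((k.factorial : ℝ) * k * ((n : ℝ) - k + 1))⁻¹ • iteratedDeriv k F 0) ∧
      q = -(((n + 1).factorial : ℝ) * ((n : ℝ) + 1))⁻¹ • iteratedDeriv (n + 1) F 0 := by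
  constructor
  · intro h
    exact ⟨fun k hk hkn ↦ (modelOpCoeff_eq_taylorCoeffWithin_iff hk hkn F v q).mp (h k (by omega)),
      (modelOpCoeff_top_eq_taylorCoeffWithin_iff n F v q).mp (h (n + 1) (by omega))⟩
  · rintro ⟨hv, hq⟩ (_ | k) hk
    · simp [modelOpCoeff, taylorCoeffWithin, hF0]
    · rcases (by omega : k + 1 ≤ n ∨ k = n) with hkn | rfl
      · exact (modelOpCoeff_eq_taylorCoeffWithin_iff (by omega) hkn F v q).mpr (hv _ (by omega) hkn)
      · exact (modelOpCoeff_top_eq_taylorCoeffWithin_iff k F v q).mpr hq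

end ModelOp

theorem modelOp_solvability_with_obstruction_general
    {E : Type*} [NormedAddCommGroup E] [NormedSpace ℝ E]
    (n : ℕ) (F : ℝ → E)
    (hF : ContDiff ℝ (n + 2) F) (hF0 : F 0 = 0) :
    ((fun r : ℝ =>
        modelOp n (modelSol n
          (fun k => (((k.factorial : ℝ)) * (k : ℝ) * ((n : ℝ) - (k : ℝ) + 1))⁻¹ •
            iteratedDeriv k F 0)
          (-((((n + 1).factorial : ℝ)) * ((n : ℝ) + 1))⁻¹ •
            iteratedDeriv (n + 1) F 0)) r - F r)
      =O[𝓝[>] (0 : ℝ)] fun r => r ^ (n + 2))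
    ∧ (∀ (v : ℕ → E) (q : E),
        ((fun r : ℝ => modelOp n (modelSol n v q) r - F r)
          =O[𝓝[>] (0 : ℝ)] fun r => r ^ (n + 2)) →
        (∀ k, 1 ≤ k → k ≤ n →
          v k = (((k.factorial : ℝ)) * (k : ℝ) * ((n : ℝ) - (k : ℝ) + 1))⁻¹ •
            iteratedDeriv k F 0)
        ∧ q = -((((n + 1).factorial : ℝ)) * ((n : ℝ) + 1))⁻¹ •
            iteratedDeriv (n + 1) F 0) := by
  refine ⟨?_, fun v q h ↦ ?_⟩
  · exact (modelOp_modelSol_sub_isBigO_iff hF _ _).mpr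
      ((forall_modelOpCoeff_eq_taylorCoeffWithin_iff hF0 _ _).mpr ⟨fun _ _ _ ↦ rfl, rfl⟩)
  · exact (forall_modelOpCoeff_eq_taylorCoeffWithin_iff hF0 v q).mp
      ((modelOp_modelSol_sub_isBigO_iff hF v q).mp h)

/-- Solvability with log obstruction for the model indicial operator: given
`F` of class `C^{n+2}` with `F(0) = 0`, the function
`u(r) = Σ_{k=1}^n (F^{(k)}(0)/(k!·k·(n-k+1))) r^k
      - (F^{(n+1)}(0)/((n+1)!·(n+1))) r^{n+1} log r`
satisfies `L u - F = O(r^{n+2})` as `r → 0⁺`, and `(u_1, …, u_n, p)` is the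
unique tuple of coefficients with this property. -/
theorem modelOp_solvability_with_obstruction
    {E : Type*} [NormedAddCommGroup E] [NormedSpace ℝ E]
    (n : ℕ) (hn : 1 ≤ n) (F : ℝ → E)
    (hF : ContDiff ℝ (n + 2) F) (hF0 : F 0 = 0) :
    ((fun r : ℝ =>
        modelOp n (modelSol n
          (fun k => (((k.factorial : ℝ)) * (k : ℝ) * ((n : ℝ) - (k : ℝ) + 1))⁻¹ •
            iteratedDeriv k F 0)
          (-((((n + 1).factorial : ℝ)) * ((n : ℝ) + 1))⁻¹ •
            iteratedDeriv (n + 1) F 0)) r - F r)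
      =O[𝓝[>] (0 : ℝ)] fun r => r ^ (n + 2))
    ∧ (∀ (v : ℕ → E) (q : E),
        ((fun r : ℝ => modelOp n (modelSol n v q) r - F r)
          =O[𝓝[>] (0 : ℝ)] fun r => r ^ (n + 2)) →
        (∀ k, 1 ≤ k → k ≤ n →
          v k = (((k.factorial : ℝ)) * (k : ℝ) * ((n : ℝ) - (k : ℝ) + 1))⁻¹ •
            iteratedDeriv k F 0)
        ∧ q = -((((n + 1).factorial : ℝ)) * ((n : ℝ) + 1))⁻¹ •
            iteratedDeriv (n + 1) F 0) :=
  modelOp_solvability_with_obstruction_general n F hF hF0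
end
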